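/- arXiv:1711.03890 — 2 statements merged into one kernel-verified Lean document; each statement's English description precedes it below -/
import Mathlib

section
/- Let c be continuous, non-negative, with c(θ,θ) = 0 for all θ. Then T_κ is contractive with respect to additive noise: for any positive semi-definite Toeplitz matrices R₀, R₁, R_w, one has T_κ(R₀ + R_w, R₁ + R_w) ≤ T_κ(R₀, R₁). -/
open MeasureTheory Matrix
open scoped ENNReal ComplexOrder

/-- The circle `T = (-π, π]`, modeled as `ℝ / 2πℤ`. -/
abbrev Tcircle := AddCircle (2 * Real.pi)

/-- The optimal mass transport cost `S(Φ₀, Φ₁)` with cost function `c`: the infimum of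
`∫∫ c dM` over all transport plans `M` (non-negative measures on `T × T`) whose marginals
are `Φ₀` and `Φ₁`.  (It equals `∞` when no transport plan exists, e.g. when the total
masses differ.) -/
noncomputable def otCost (c : Tcircle → Tcircle → ℝ) (Φ₀ Φ₁ : Measure Tcircle) : ℝ≥0∞ :=
  sInf { x | ∃ M : Measure (Tcircle × Tcircle),
      M.map Prod.fst = Φ₀ ∧ M.map Prod.snd = Φ₁ ∧
      x = ∫⁻ p, ENNReal.ofReal (c p.1 p.2) ∂M }

/-- The Fourier vector `a(θ) = (1, e^{iθ}, ..., e^{i(n-1)θ})` on the circle. -/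
noncomputable def aVecC (n : ℕ) (θ : Tcircle) : Fin n → ℂ :=
  fun k => fourier (k : ℤ) θ

/-- `Γ(Φ) = (1/2π) ∫ a(θ) a(θ)ᴴ dΦ(θ)`, entrywise `Γ(Φ)_{jk} = (1/2π) ∫ e^{i(j-k)θ} dΦ`. -/
noncomputable def GammaC (n : ℕ) (μ : Measure Tcircle) : Matrix (Fin n) (Fin n) ℂ :=
  Matrix.of fun j k : Fin n =>
    ((1 / (2 * Real.pi) : ℝ) : ℂ) * ∫ θ, fourier ((j : ℤ) - (k : ℤ)) θ ∂μ

/-- A matrix is Toeplitz if its entries depend only on the difference of the indices. -/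
def IsToeplitz {n : ℕ} (R : Matrix (Fin n) (Fin n) ℂ) : Prop :=
  ∀ j k j' k' : Fin n, (j : ℤ) - (k : ℤ) = (j' : ℤ) - (k' : ℤ) → R j k = R j' k'

/-- The adjoint map `Γ*(Λ)(θ) = (1/2π) a(θ)ᴴ Λ a(θ)`. -/
noncomputable def GammaStarC (n : ℕ) (Λ : Matrix (Fin n) (Fin n) ℂ) (θ : Tcircle) : ℂ :=
  ((1 / (2 * Real.pi) : ℝ) : ℂ) * (star (aVecC n θ) ⬝ᵥ (Λ *ᵥ aVecC n θ))

/-- The dual characterization of `T_κ(R₀,R₁)`: the supremum of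
`⟨Λ₀,R₀⟩ + ⟨Λ₁,R₁⟩` over Hermitian pairs `(Λ₀,Λ₁)` with
`Γ*(Λ₀)(θ) + Γ*(Λ₁)(φ) ≤ c(θ,φ)` and `Γ*(Λ_j) ≤ κ` pointwise. -/
noncomputable def Tdual (n : ℕ) (c : Tcircle → Tcircle → ℝ) (κ : ℝ)
    (R₀ R₁ : Matrix (Fin n) (Fin n) ℂ) : ℝ :=
  sSup { x | ∃ Λ₀ Λ₁ : Matrix (Fin n) (Fin n) ℂ, Λ₀.IsHermitian ∧ Λ₁.IsHermitian ∧
      (∀ θ φ : Tcircle, (GammaStarC n Λ₀ θ).re + (GammaStarC n Λ₁ φ).re ≤ c θ φ) ∧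
      (∀ θ : Tcircle, (GammaStarC n Λ₀ θ).re ≤ κ) ∧
      (∀ φ : Tcircle, (GammaStarC n Λ₁ φ).re ≤ κ) ∧
      x = (Matrix.trace (Λ₀ * R₀ᴴ)).re + (Matrix.trace (Λ₁ * R₁ᴴ)).re }


open Finset
open scoped ComplexConjugate

noncomputable section
def wker (r : ℕ → ℂ) (j k : ℕ) : ℂ := if k ≤ j then r (j - k) else conj (r (k - j))
def Tv (r : ℕ → ℂ) (N : ℕ) (u : ℕ → ℂ) (j : ℕ) : ℂ := ∑ k ∈ range N, wker r j k * u k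
def Bil (r : ℕ → ℂ) (N : ℕ) (a b : ℕ → ℂ) : ℂ := ∑ j ∈ range N, conj (a j) * Tv r N b j
def Qf (r : ℕ → ℂ) (N : ℕ) (u : ℕ → ℂ) : ℂ := Bil r N u u
def Pd (r : ℕ → ℂ) (N : ℕ) : Prop := ∀ u : ℕ → ℂ, (∃ j < N, u j ≠ 0) → 0 < Qf r N u

section basic
variable {r r' : ℕ → ℂ} {N m : ℕ} {a b u u' : ℕ → ℂ}

lemma wker_succ (r : ℕ → ℂ) (j k : ℕ) : wker r (j+1) (k+1) = wker r j k := by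
  unfold wker
  rcases le_or_gt k j with h | h
  · rw [if_pos h, if_pos (by omega), Nat.succ_sub_succ]
  · rw [if_neg (by omega), if_neg (by omega), Nat.succ_sub_succ]

lemma wker_conj (hr0 : conj (r 0) = r 0) (j k : ℕ) :
    conj (wker r j k) = wker r k j := by
  unfold wker
  rcases lt_trichotomy j k with h | h | h
  · rw [if_neg (by omega), if_pos (by omega), Complex.conj_conj]
  · subst h; simp [hr0]
  · rw [if_pos (by omega), if_neg (by omega)]

lemma wker_congr (h : ∀ m < N, r m = r' m) {j k : ℕ}
    (hj : j < N) (hk : k < N) : wker r j k = wker r' j k := by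
  unfold wker
  rcases le_or_gt k j with hkj | hkj
  · rw [if_pos hkj, if_pos hkj, h _ (by omega)]
  · rw [if_neg (by omega), if_neg (by omega), h _ (by omega)]

lemma Tv_congr (h : ∀ j < N, u j = u' j) (j : ℕ) : Tv r N u j = Tv r N u' j :=
  Finset.sum_congr rfl fun k hk => by rw [h k (mem_range.1 hk)]

lemma Bil_congr (ha : ∀ j < N, a j = u j) (hb : ∀ j < N, b j = u' j) :
    Bil r N a b = Bil r N u u' :=
  Finset.sum_congr rfl fun j hj => by rw [ha j (mem_range.1 hj), Tv_congr hb]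

lemma Bil_congr_r (h : ∀ k < N, r k = r' k) : Bil r N a b = Bil r' N a b := by
  refine Finset.sum_congr rfl fun j hj => ?_
  congr 1
  exact Finset.sum_congr rfl fun k hk =>
    by rw [wker_congr h (mem_range.1 hj) (mem_range.1 hk)]

lemma Bil_double : Bil r N a b = ∑ j ∈ range N, ∑ k ∈ range N,
    conj (a j) * wker r j k * b k := by
  unfold Bil Tv
  refine Finset.sum_congr rfl fun j _ => ?_
  rw [Finset.mul_sum]
  exact Finset.sum_congr rfl fun k _ => by ring

lemma Bil_conj (hr0 : conj (r 0) = r 0) : conj (Bil r N a b) = Bil r N b a := by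
  rw [Bil_double, Bil_double, map_sum, Finset.sum_comm]
  refine Finset.sum_congr rfl fun k _ => ?_
  rw [map_sum]
  refine Finset.sum_congr rfl fun j _ => ?_
  rw [_root_.map_mul, _root_.map_mul, Complex.conj_conj, wker_conj hr0]
  ring

lemma Tv_add (j : ℕ) : Tv r N (a + b) j = Tv r N a j + Tv r N b j := by
  unfold Tv
  rw [← Finset.sum_add_distrib]
  exact Finset.sum_congr rfl fun k _ => by simp [Pi.add_apply]; ring

lemma Tv_smul (t : ℂ) (j : ℕ) : Tv r N (t • a) j = t * Tv r N a j := by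
  unfold Tv
  rw [Finset.mul_sum]
  exact Finset.sum_congr rfl fun k _ => by simp [Pi.smul_apply]; ring

lemma Bil_add_right : Bil r N a (u + u') = Bil r N a u + Bil r N a u' := by
  unfold Bil
  rw [← Finset.sum_add_distrib]
  exact Finset.sum_congr rfl fun j _ => by rw [Tv_add]; ring

lemma Bil_add_left : Bil r N (u + u') b = Bil r N u b + Bil r N u' b := by
  unfold Bil
  rw [← Finset.sum_add_distrib]
  exact Finset.sum_congr rfl fun j _ => by simp [Pi.add_apply]; ring

lemma Bil_smul_right (t : ℂ) : Bil r N a (t • b) = t * Bil r N a b := by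
  unfold Bil
  rw [Finset.mul_sum]
  exact Finset.sum_congr rfl fun j _ => by rw [Tv_smul]; ring

lemma Bil_smul_left (t : ℂ) : Bil r N (t • a) b = conj t * Bil r N a b := by
  unfold Bil
  rw [Finset.mul_sum]
  exact Finset.sum_congr rfl fun j _ => by simp [Pi.smul_apply]; ring

lemma Qf_expand (t : ℂ) : Qf r N (a + t • b) =
    Qf r N a + t * Bil r N a b + conj t * Bil r N b a + conj t * t * Qf r N b := by
  unfold Qf
  rw [Bil_add_left, Bil_add_right, Bil_add_right, Bil_smul_left, Bil_smul_right,
    Bil_smul_left, Bil_smul_right]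
  ring

lemma Qf_congr (h : ∀ j < N, u j = u' j) : Qf r N u = Qf r N u' := Bil_congr h h

lemma Tv_shrink (hb : ∀ j, m ≤ j → b j = 0) (hmN : m ≤ N) (j : ℕ) :
    Tv r N b j = Tv r m b j := by
  unfold Tv
  refine (Finset.sum_subset (Finset.range_subset_range.2 hmN) fun k _ hk => ?_).symm
  rw [hb k (by simpa using hk), mul_zero]

lemma Bil_shrink (ha : ∀ j, m ≤ j → a j = 0) (hb : ∀ j, m ≤ j → b j = 0) (hmN : m ≤ N) :
    Bil r N a b = Bil r m a b := by
  unfold Bil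
  rw [← Finset.sum_subset (Finset.range_subset_range.2 hmN) fun j _ hj => by
    rw [ha j (by simpa using hj), map_zero, zero_mul]]
  exact Finset.sum_congr rfl fun j _ => by rw [Tv_shrink hb hmN]

lemma Qf_zero : Qf r N (fun _ => 0) = 0 := by
  unfold Qf Bil
  exact Finset.sum_eq_zero fun j _ => by simp

end basic

def toep (N : ℕ) (r : ℕ → ℂ) : Matrix (Fin N) (Fin N) ℂ :=
  Matrix.of fun j k => wker r j k

lemma Qf_toep (N : ℕ) (r : ℕ → ℂ) (u : Fin N → ℂ) :
    star u ⬝ᵥ (toep N r *ᵥ u) = Qf r N (fun j => if h : j < N then u ⟨j, h⟩ else 0) := by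
  unfold Qf Bil Tv dotProduct Matrix.mulVec toep
  rw [← Fin.sum_univ_eq_sum_range]
  refine Finset.sum_congr rfl fun j _ => ?_
  simp only [dif_pos j.isLt, Pi.star_apply, Fin.eta]
  congr 1
  unfold dotProduct
  rw [← Fin.sum_univ_eq_sum_range]
  refine Finset.sum_congr rfl fun k _ => ?_
  simp only [dif_pos k.isLt, Fin.eta, Matrix.of_apply]

lemma toep_isHermitian {N : ℕ} {r : ℕ → ℂ} (hr0 : conj (r 0) = r 0) :
    (toep N r).IsHermitian := by
  refine Matrix.IsHermitian.ext fun j k => ?_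
  show conj ((toep N r) k j) = (toep N r) j k
  exact wker_conj hr0 _ _

lemma toep_posDef_of_Pd {N : ℕ} {r : ℕ → ℂ} (hr0 : conj (r 0) = r 0) (h : Pd r N) :
    (toep N r).PosDef := by
  refine Matrix.PosDef.of_dotProduct_mulVec_pos (toep_isHermitian hr0) fun x hx => ?_
  rw [Qf_toep]
  obtain ⟨i, hi⟩ := Function.ne_iff.1 hx
  exact h _ ⟨i, i.isLt, by simpa [dif_pos i.isLt] using hi⟩

lemma Pd_of_toep_posDef {N : ℕ} {r : ℕ → ℂ} (h : (toep N r).PosDef) : Pd r N := by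
  intro u ⟨j, hj, hne⟩
  have h2 := h.dotProduct_mulVec_pos (x := fun i : Fin N => u i) (Function.ne_iff.2 ⟨⟨j, hj⟩, hne⟩)
  rw [Qf_toep] at h2
  refine lt_of_lt_of_eq h2 (Qf_congr fun i hi => by rw [dif_pos hi])

lemma Pd_mono {N m : ℕ} {r : ℕ → ℂ} (h : Pd r N) (hm : m ≤ N) : Pd r m := by
  intro u ⟨j, hj, hne⟩
  set u' : ℕ → ℂ := fun i => if i < m then u i else 0 with hu'
  have h1 : Qf r m u = Qf r m u' := Qf_congr fun i hi => by simp [hu', hi]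
  have h2 : Qf r N u' = Qf r m u' :=
    Bil_shrink (fun i hi => by simp [hu']; omega) (fun i hi => by simp [hu']; omega) hm
  rw [h1, ← h2]
  exact h u' ⟨j, by omega, by simpa [hu', hj] using hne⟩

/-- The one-step positive definite Toeplitz extension. -/
lemma pd_extend {m : ℕ} {r : ℕ → ℂ} (hr0 : conj (r 0) = r 0) (hPD : Pd r (m+1)) :
    ∃ r' : ℕ → ℂ, (∀ k < m+1, r' k = r k) ∧ Pd r' (m+2) := by
  classical
  -- the (m × m) corner block
  set B : Matrix (Fin m) (Fin m) ℂ := toep m r with hB_def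
  have hB : B.PosDef := toep_posDef_of_Pd hr0 (Pd_mono hPD (by omega))
  have hsurj : Function.Surjective B.mulVec :=
    Matrix.mulVec_surjective_iff_isUnit.2 hB.isUnit
  obtain ⟨y, hy⟩ := hsurj (fun i => conj (r (m - (i : ℕ))))
  set yn : ℕ → ℂ := fun j => if h : j < m then y ⟨j, h⟩ else 0 with hyn_def
  set z : ℕ → ℂ := fun j => if j = 0 then 0 else yn (j - 1) with hz_def
  set x : ℂ := conj (∑ k ∈ range m, conj (r (k+1)) * yn k) with hx_def
  set r' : ℕ → ℂ := Function.update r (m+1) x with hr'_def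
  have hagree : ∀ k < m+1, r' k = r k := fun k hk =>
    Function.update_of_ne (by omega) _ _
  have hr'0 : conj (r' 0) = r' 0 := by rw [hagree 0 (by omega)]; exact hr0
  refine ⟨r', hagree, ?_⟩
  -- `c j` : the new column
  set c : ℕ → ℂ := fun j => conj (r' (m+1-j)) with hc_def
  -- yn is supported in `[0,m)`, z in `[0,m+1)`
  have hyn0 : ∀ j, m ≤ j → yn j = 0 := fun j hj => by simp [hyn_def]; omega
  have hz0 : ∀ j, m+1 ≤ j → z j = 0 := fun j hj => by
    simp only [hz_def]
    rw [if_neg (by omega)]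
    exact hyn0 _ (by omega)
  -- Key A : Tv r (m+1) z j = c j for j < m+1
  have keyA : ∀ j < m+1, Tv r (m+1) z j = c j := by
    intro j hj
    unfold Tv
    rcases Nat.eq_zero_or_pos j with rfl | hjpos
    · rw [Finset.sum_range_succ']
      simp only [hz_def, if_neg (Nat.succ_ne_zero _), if_pos rfl, Nat.add_sub_cancel,
        mul_zero, add_zero]
      have : ∀ i ∈ range m, wker r 0 (i+1) * yn i = conj (r (i+1)) * yn i := by
        intro i _
        rw [show wker r 0 (i+1) = conj (r (i+1)) by
          unfold wker; rw [if_neg (by omega), Nat.sub_zero]]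
      rw [Finset.sum_congr rfl this]
      have : c 0 = conj x := by
        simp only [hc_def, Nat.sub_zero, hr'_def, Function.update_self]
      rw [this, hx_def, Complex.conj_conj]
    · obtain ⟨i, rfl⟩ : ∃ i, j = i + 1 := ⟨j - 1, by omega⟩
      rw [Finset.sum_range_succ']
      simp only [hz_def, if_pos rfl, mul_zero, add_zero, if_neg (Nat.succ_ne_zero _),
        Nat.add_sub_cancel]
      have : ∀ k ∈ range m, wker r (i+1) (k+1) * yn k = wker r i k * yn k := by
        intro k _; rw [wker_succ]
      rw [Finset.sum_congr rfl this]
      have hBy : (B *ᵥ y) ⟨i, by omega⟩ = conj (r (m - i)) := by rw [hy]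
      unfold Matrix.mulVec dotProduct at hBy
      rw [← Fin.sum_univ_eq_sum_range (fun k => wker r i k * yn k) m] at *
      have : ∀ k : Fin m, wker r i k * yn k = B ⟨i, by omega⟩ k * y k := by
        intro k
        simp only [hyn_def, dif_pos k.isLt, Fin.eta, hB_def, toep, Matrix.of_apply]
      rw [Finset.sum_congr rfl fun k _ => this k, hBy]
      simp only [hc_def]
      rw [hagree (m+1-(i+1)) (by omega)]
      congr 2
      omega
  -- the scalar σ
  set σ : ℂ := ∑ j ∈ range m, conj (yn j) * conj (r (m - j)) with hσ_def
  have hQz : Qf r (m+1) z = σ := by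
    unfold Qf Bil
    have e : ∀ j ∈ range (m+1), conj (z j) * Tv r (m+1) z j = conj (z j) * c j := by
      intro j hj; rw [keyA j (mem_range.1 hj)]
    rw [Finset.sum_congr rfl e, Finset.sum_range_succ']
    simp only [hz_def, if_pos rfl, map_zero, zero_mul, add_zero,
      if_neg (Nat.succ_ne_zero _), Nat.add_sub_cancel]
    refine Finset.sum_congr rfl fun i hi => ?_
    congr 1
    simp only [hc_def]
    rw [hagree (m+1-(i+1)) (by omega)]
    congr 2
    omega
  have hσ_conj : conj σ = σ := by
    have h := Bil_conj (N := m+1) (a := z) (b := z) hr0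
    rw [show Bil r (m+1) z z = Qf r (m+1) z from rfl, hQz] at h
    exact h
  have hTyn : ∀ j, j < m → Tv r m yn j = conj (r (m - j)) := by
    intro j hj
    unfold Tv
    have hBy : (B *ᵥ y) ⟨j, hj⟩ = conj (r (m - j)) := by rw [hy]
    unfold Matrix.mulVec dotProduct at hBy
    rw [← Fin.sum_univ_eq_sum_range (fun k => wker r j k * yn k) m, ← hBy]
    refine Finset.sum_congr rfl fun k _ => ?_
    simp only [hyn_def, dif_pos k.isLt, Fin.eta, hB_def, toep, Matrix.of_apply]
  have hQyn : Qf r (m+1) yn = σ := by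
    have h1 : Qf r (m+1) yn = Qf r m yn := Bil_shrink hyn0 hyn0 (by omega)
    rw [h1]
    unfold Qf Bil
    refine Finset.sum_congr rfl fun j hj => ?_
    rw [hTyn j (mem_range.1 hj)]
  set dm : ℕ → ℂ := fun j => if j = m then 1 else 0 with hdm_def
  have hTdm : ∀ j, Tv r (m+1) dm j = wker r j m := by
    intro j
    unfold Tv
    rw [Finset.sum_eq_single_of_mem m (mem_range.2 (by omega))]
    · simp [hdm_def]
    · intro k _ hk; simp [hdm_def, hk]
  have hτσ : Bil r (m+1) dm yn = σ := by
    have hBdmyn : Bil r (m+1) dm yn = ∑ k ∈ range m, r (m - k) * yn k := by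
      unfold Bil
      rw [Finset.sum_eq_single_of_mem m (mem_range.2 (by omega))]
      · simp only [hdm_def, if_pos rfl, _root_.map_one, one_mul]
        unfold Tv
        rw [Finset.sum_range_succ, hyn0 m le_rfl, mul_zero, add_zero]
        refine Finset.sum_congr rfl fun k hk => ?_
        congr 1
        unfold wker
        rw [if_pos (by have := mem_range.1 hk; omega)]
      · intro j _ hj; simp [hdm_def, hj]
    rw [hBdmyn, ← hσ_conj, hσ_def, map_sum]
    refine Finset.sum_congr rfl fun k _ => ?_
    rw [_root_.map_mul, Complex.conj_conj, Complex.conj_conj]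
    ring
  have hBynδ : Bil r (m+1) yn dm = σ := by
    unfold Bil
    rw [Finset.sum_range_succ, hyn0 m le_rfl, map_zero, zero_mul, add_zero]
    refine Finset.sum_congr rfl fun j hj => ?_
    rw [hTdm]
    congr 1
    unfold wker
    rw [if_neg (by have := mem_range.1 hj; omega)]
  have hQdm : Qf r (m+1) dm = r 0 := by
    unfold Qf Bil
    rw [Finset.sum_eq_single_of_mem m (mem_range.2 (by omega))]
    · rw [hTdm]
      simp only [hdm_def, if_pos rfl, _root_.map_one, one_mul]
      unfold wker
      rw [if_pos le_rfl, Nat.sub_self]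
    · intro j _ hj; simp [hdm_def, hj]
  set γ : ℂ := r 0 - σ with hγ_def
  have keyD : 0 < γ := by
    have huu : Qf r (m+1) (dm + (-1 : ℂ) • yn) = γ := by
      rw [Qf_expand, hQdm, hQyn, hτσ, hBynδ, hγ_def]
      simp only [map_neg, _root_.map_one]
      ring
    have h := hPD (dm + (-1 : ℂ) • yn) ⟨m, by omega, by
      simp [hdm_def, hyn0 m le_rfl]⟩
    rwa [huu] at h
  -- final goal : Pd r' (m+2)
  intro us hus
  set u : ℕ → ℂ := fun j => if j < m+1 then us j else 0 with hu_def
  set t : ℂ := us (m+1) with ht_def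
  set dM : ℕ → ℂ := fun j => if j = m+1 then 1 else 0 with hdM_def
  have hu0 : ∀ j, m+1 ≤ j → u j = 0 := fun j hj => by
    simp only [hu_def]; rw [if_neg (by omega)]
  have step0 : Qf r' (m+2) us = Qf r' (m+2) (u + t • dM) := by
    refine Qf_congr fun j hj => ?_
    simp only [hu_def, hdM_def, Pi.add_apply, Pi.smul_apply, smul_eq_mul]
    rcases lt_or_ge j (m+1) with h | h
    · rw [if_pos h, if_neg (by omega), mul_zero, add_zero]
    · have hje : j = m+1 := by omega
      subst hje
      rw [if_neg (by omega), if_pos rfl, mul_one, zero_add, ht_def]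
  have hTdM : ∀ j, Tv r' (m+2) dM j = wker r' j (m+1) := by
    intro j
    unfold Tv
    rw [Finset.sum_eq_single_of_mem (m+1) (mem_range.2 (by omega))]
    · simp [hdM_def]
    · intro k _ hk; simp [hdM_def, hk]
  have hBudM : Bil r' (m+2) u dM = Bil r (m+1) u z := by
    have e1 : Bil r' (m+2) u dM = ∑ j ∈ range (m+1), conj (u j) * wker r' j (m+1) := by
      unfold Bil
      rw [← Finset.sum_subset (Finset.range_subset_range.2 (by omega : m+1 ≤ m+2)) fun j _ hj => by
        rw [hu0 j (by simpa using hj), map_zero, zero_mul]]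
      exact Finset.sum_congr rfl fun j _ => by rw [hTdM]
    rw [e1]
    unfold Bil
    refine Finset.sum_congr rfl fun j hj => ?_
    rw [keyA j (mem_range.1 hj)]
    congr 1
    simp only [hc_def]
    unfold wker
    rw [if_neg (by have := mem_range.1 hj; omega)]
  have hQdM : Qf r' (m+2) dM = r 0 := by
    unfold Qf Bil
    rw [Finset.sum_eq_single_of_mem (m+1) (mem_range.2 (by omega))]
    · rw [hTdM]
      simp only [hdM_def, if_pos rfl, _root_.map_one, one_mul]
      unfold wker
      rw [if_pos le_rfl, Nat.sub_self]
      exact hagree 0 (by omega)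
    · intro j _ hj; simp [hdM_def, hj]
  have hQu : Qf r' (m+2) u = Qf r (m+1) u := by
    unfold Qf
    rw [Bil_shrink hu0 hu0 (by omega : m+1 ≤ m+2), Bil_congr_r hagree]
  have KI : Qf r' (m+2) us = Qf r (m+1) (u + t • z) + conj t * t * γ := by
    rw [step0, Qf_expand, Qf_expand, hQu, hQdM, hQz,
      ← Bil_conj hr'0 (a := u) (b := dM), ← Bil_conj hr0 (a := u) (b := z), hBudM, hγ_def]
    ring
  rw [KI]
  rcases eq_or_ne t 0 with ht0 | ht0
  · have e : Qf r (m+1) (u + t • z) = Qf r (m+1) u := by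
      rw [ht0]
      congr 1
      funext j
      simp
    rw [e, ht0]
    simp only [map_zero, zero_mul, add_zero]
    refine hPD u ?_
    obtain ⟨j, hj, hne⟩ := hus
    have hjne : j ≠ m+1 := fun h => hne (by rw [h, ← ht_def, ht0])
    exact ⟨j, by omega, by
      simpa [hu_def, show j ≤ m by omega] using hne⟩
  · have h1 : 0 < conj t * t := by
      have e : conj t * t = (Complex.normSq t : ℂ) := by
        rw [Complex.normSq_eq_conj_mul_self]
      rw [e, Complex.zero_lt_real]
      exact Complex.normSq_pos.2 ht0
    have h2 : 0 < conj t * t * γ := mul_pos h1 keyD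
    have h3 : 0 ≤ Qf r (m+1) (u + t • z) := by
      by_cases hz : ∃ j, j < m+1 ∧ (u + t • z) j ≠ 0
      · exact le_of_lt (hPD _ (by obtain ⟨j, hj, hne⟩ := hz; exact ⟨j, hj, hne⟩))
      · push_neg at hz
        have e : Qf r (m+1) (u + t • z) = Qf r (m+1) (fun _ => (0:ℂ)) :=
          Qf_congr fun j hj => hz j hj
        rw [e, Qf_zero]
    exact lt_of_lt_of_le h2 (le_add_of_nonneg_left h3)

lemma pd_all {n : ℕ} (hn : 0 < n) {r : ℕ → ℂ} (hr0 : conj (r 0) = r 0) (h : Pd r n) :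
    ∀ N, n ≤ N → ∃ r' : ℕ → ℂ, (∀ k < n, r' k = r k) ∧ Pd r' N := by
  refine Nat.le_induction ⟨r, fun _ _ => rfl, h⟩ ?_
  rintro N hN ⟨r', hag, hpd⟩
  obtain ⟨m, rfl⟩ : ∃ m, N = m + 1 := ⟨N - 1, by omega⟩
  have hr'0 : conj (r' 0) = r' 0 := by rw [hag 0 hn]; exact hr0
  obtain ⟨r'', hag2, hpd2⟩ := pd_extend hr'0 hpd
  exact ⟨r'', fun k hk => by rw [hag2 k (by omega), hag k hk], hpd2⟩

lemma fourier_grid (N : ℕ) (hN : 0 < N) (m : ℤ) (j : ℕ) :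
    (fourier m ((Real.pi * j / N : ℝ) : Tcircle) : ℂ) =
      Complex.exp (Real.pi * m / N * Complex.I) ^ j := by
  rw [fourier_coe_apply, ← Complex.exp_nat_mul]
  congr 1
  have hπ : (Real.pi : ℂ) ≠ 0 := Complex.ofReal_ne_zero.2 Real.pi_ne_zero
  have hN' : (N : ℂ) ≠ 0 := Nat.cast_ne_zero.2 hN.ne'
  push_cast
  field_simp

lemma grid_sum (N : ℕ) (hN : 0 < N) (m : ℤ) (hm : m.natAbs < 2*N) :
    ∑ j ∈ range (2*N), (fourier m ((Real.pi * j / N : ℝ) : Tcircle) : ℂ) =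
      if m = 0 then ((2*N : ℕ) : ℂ) else 0 := by
  have e : ∀ j ∈ range (2*N), (fourier m ((Real.pi * j / N : ℝ) : Tcircle) : ℂ) =
      Complex.exp (Real.pi * m / N * Complex.I) ^ j := fun j _ => fourier_grid N hN m j
  rw [Finset.sum_congr rfl e]
  rcases eq_or_ne m 0 with rfl | hm0
  · simp
  · rw [if_neg hm0]
    set ω : ℂ := Complex.exp (Real.pi * m / N * Complex.I) with hω
    have hω1 : ω ≠ 1 := by
      rw [hω, Ne, Complex.exp_eq_one_iff]
      rintro ⟨k, hk⟩
      have hN' : (N : ℂ) ≠ 0 := Nat.cast_ne_zero.2 hN.ne'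
      have hπ : (Real.pi : ℂ) ≠ 0 := Complex.ofReal_ne_zero.2 Real.pi_ne_zero
      have hI : Complex.I ≠ 0 := Complex.I_ne_zero
      have e1 : (↑Real.pi * ↑m / ↑N * Complex.I) * (↑N * (↑Real.pi * Complex.I)⁻¹) = (m : ℂ) := by
        field_simp
      have e2 : ((k : ℂ) * (2 * ↑Real.pi * Complex.I)) * (↑N * (↑Real.pi * Complex.I)⁻¹)
          = 2 * k * N := by
        field_simp
      have h3 : (m : ℂ) = 2 * k * N := by rw [← e1, hk, e2]
      have h4 : m = 2 * k * N := by exact_mod_cast h3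
      rcases eq_or_ne k 0 with rfl | hk0
      · simp at h4; exact hm0 h4
      · have h5 : m.natAbs = 2 * k.natAbs * N := by
          rw [h4, Int.natAbs_mul, Int.natAbs_mul]
          simp
        have h6 : 1 ≤ k.natAbs := Int.natAbs_pos.2 hk0
        nlinarith [hm]
    rw [geom_sum_eq hω1]
    have hωN : ω ^ (2*N) = 1 := by
      rw [hω, ← Complex.exp_nat_mul]
      have hN' : (N : ℂ) ≠ 0 := Nat.cast_ne_zero.2 hN.ne'
      have e2 : (2*N : ℕ) * ((Real.pi : ℂ) * m / N * Complex.I) = m * (2 * Real.pi * Complex.I) := by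
        push_cast
        field_simp
      rw [e2, Complex.exp_int_mul_two_pi_mul_I]
    rw [hωN, sub_self, zero_div]

def wkerZ (r : ℕ → ℂ) (d : ℤ) : ℂ := if 0 ≤ d then r d.natAbs else conj (r d.natAbs)

lemma wker_eq_wkerZ {r : ℕ → ℂ} {u v : ℕ} {d : ℤ} (h : (u:ℤ) - v = d) :
    wker r u v = wkerZ r d := by
  unfold wker wkerZ
  rcases le_or_gt v u with hvu | hvu
  · rw [if_pos hvu, if_pos (by omega)]
    congr 1
    omega
  · rw [if_neg (by omega), if_neg (by omega)]
    congr 2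
    omega

lemma count_diag (N : ℕ) (d : ℤ) (hd : d.natAbs < N) :
    ((range N ×ˢ range N).filter (fun x : ℕ × ℕ => (x.1 : ℤ) - x.2 = d)).card
      = N - d.natAbs := by
  rw [← Finset.card_range (N - d.natAbs)]
  symm
  apply Finset.card_bij' (fun (i : ℕ) _ => ((i + d.toNat, i + (-d).toNat) : ℕ × ℕ))
    (fun (x : ℕ × ℕ) _ => min x.1 x.2)
  · intro i hi
    simp only [Finset.mem_filter, Finset.mem_product, Finset.mem_range] at *
    refine ⟨⟨by omega, by omega⟩, by push_cast; omega⟩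
  · intro x hx
    simp only [Finset.mem_filter, Finset.mem_product, Finset.mem_range] at *
    omega
  · intro i hi
    simp only [Finset.mem_range] at hi
    omega
  · intro x hx
    simp only [Finset.mem_filter, Finset.mem_product, Finset.mem_range] at hx
    obtain ⟨⟨h1, h2⟩, h3⟩ := hx
    have : min x.1 x.2 + d.toNat = x.1 ∧ min x.1 x.2 + (-d).toNat = x.2 := by omega
    exact Prod.ext this.1 this.2

lemma sum_diag (N : ℕ) (d : ℤ) (hd : d.natAbs < N) (r : ℕ → ℂ) :
    (∑ u ∈ range N, ∑ v ∈ range N, if ((u:ℤ) - v = d) then wker r u v else 0)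
      = ((N - d.natAbs : ℕ) : ℂ) * wkerZ r d := by
  have e : ∀ u ∈ range N, ∀ v ∈ range N,
      (if ((u:ℤ) - v = d) then wker r u v else 0)
        = (if ((u:ℤ) - v = d) then wkerZ r d else 0) := by
    intro u _ v _
    split
    · rw [wker_eq_wkerZ (by assumption)]
    · rfl
  rw [Finset.sum_congr rfl fun u hu => Finset.sum_congr rfl fun v hv => e u hu v hv]
  rw [← Finset.sum_product']
  rw [← Finset.sum_filter, Finset.sum_const, count_diag N d hd, nsmul_eq_mul]

lemma quad_expand {n : ℕ} (A : Matrix (Fin n) (Fin n) ℂ) (θ : Tcircle) :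
    star (aVecC n θ) ⬝ᵥ A *ᵥ aVecC n θ
      = ∑ p : Fin n, ∑ q : Fin n, A p q * (fourier ((q:ℤ) - p) θ : ℂ) := by
  unfold dotProduct Matrix.mulVec aVecC
  refine Finset.sum_congr rfl fun p _ => ?_
  unfold dotProduct
  rw [Finset.mul_sum]
  refine Finset.sum_congr rfl fun q _ => ?_
  simp only [Pi.star_apply, RCLike.star_def]
  rw [← fourier_neg, show ((q:ℤ) - p) = -(p:ℤ) + q by ring, fourier_add]
  ring

lemma Qf_fourier (r : ℕ → ℂ) (N : ℕ) (θ : Tcircle) :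
    Qf r N (fun k => (fourier (k:ℤ) θ : ℂ))
      = ∑ u ∈ range N, ∑ v ∈ range N, wker r u v * (fourier ((v:ℤ) - u) θ : ℂ) := by
  unfold Qf Bil Tv
  refine Finset.sum_congr rfl fun u _ => ?_
  rw [Finset.mul_sum]
  refine Finset.sum_congr rfl fun v _ => ?_
  rw [← fourier_neg (n := (u:ℤ)), show ((v:ℤ) - u) = -(u:ℤ) + v by ring, fourier_add]
  ring

lemma herm_quad_conj {n : ℕ} {A : Matrix (Fin n) (Fin n) ℂ} (hA : A.IsHermitian)
    (x : Fin n → ℂ) : conj (star x ⬝ᵥ A *ᵥ x) = star x ⬝ᵥ A *ᵥ x := by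
  calc conj (star x ⬝ᵥ A *ᵥ x) = star (star x ⬝ᵥ A *ᵥ x) := rfl
    _ = star (A *ᵥ x) ⬝ᵥ x := (star_dotProduct _ _).symm
    _ = (star x ᵥ* Aᴴ) ⬝ᵥ x := by rw [star_mulVec]
    _ = star x ⬝ᵥ (Aᴴ *ᵥ x) := (dotProduct_mulVec _ _ _).symm
    _ = star x ⬝ᵥ A *ᵥ x := by rw [hA.eq]

lemma cnonpos {z : ℂ} (hre : z.re ≤ 0) (hconj : conj z = z) : z ≤ 0 := by
  rw [Complex.le_def]
  exact ⟨by simpa using hre, by simpa using (Complex.conj_eq_iff_im.1 hconj)⟩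

lemma fejer_ineq {n : ℕ} (hn : 0 < n) (M : Matrix (Fin n) (Fin n) ℂ) (hM : M.IsHermitian)
    (hMneg : ∀ θ : Tcircle, (star (aVecC n θ) ⬝ᵥ M *ᵥ aVecC n θ).re ≤ 0)
    {N : ℕ} (hNn : n ≤ N) {r : ℕ → ℂ} (hpd : Pd r N) :
    (∑ p : Fin n, ∑ q : Fin n,
        M p q * (((N - ((q:ℤ) - p).natAbs : ℕ)) : ℂ) * wkerZ r ((q:ℤ) - p)).re ≤ 0 := by
  have hN : 0 < N := lt_of_lt_of_le hn hNn
  set θf : ℕ → Tcircle := fun j => ((Real.pi * j / N : ℝ) : Tcircle) with hθ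
  have hP : ∀ j, (star (aVecC n (θf j)) ⬝ᵥ M *ᵥ aVecC n (θf j)) ≤ 0 :=
    fun j => cnonpos (hMneg _) (herm_quad_conj hM _)
  have hG : ∀ j, 0 ≤ Qf r N (fun k => (fourier (k:ℤ) (θf j) : ℂ)) := by
    intro j
    refine le_of_lt (hpd _ ⟨0, hN, ?_⟩)
    simp only [Nat.cast_zero]
    rw [fourier_zero]
    exact one_ne_zero
  have hS : (∑ j ∈ range (2*N), (star (aVecC n (θf j)) ⬝ᵥ M *ᵥ aVecC n (θf j))
      * Qf r N (fun k => (fourier (k:ℤ) (θf j) : ℂ))) ≤ 0 :=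
    Finset.sum_nonpos fun j _ => mul_nonpos_of_nonpos_of_nonneg (hP j) (hG j)
  have hexp : (∑ j ∈ range (2*N), (star (aVecC n (θf j)) ⬝ᵥ M *ᵥ aVecC n (θf j))
      * Qf r N (fun k => (fourier (k:ℤ) (θf j) : ℂ)))
      = ((2*N : ℕ) : ℂ) * ∑ p : Fin n, ∑ q : Fin n,
        M p q * (((N - ((q:ℤ) - p).natAbs : ℕ)) : ℂ) * wkerZ r ((q:ℤ) - p) := by
    calc (∑ j ∈ range (2*N), (star (aVecC n (θf j)) ⬝ᵥ M *ᵥ aVecC n (θf j))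
          * Qf r N (fun k => (fourier (k:ℤ) (θf j) : ℂ)))
        = ∑ j ∈ range (2*N), ∑ p : Fin n, ∑ q : Fin n, ∑ u ∈ range N, ∑ v ∈ range N,
            M p q * wker r u v * (fourier ((q:ℤ) - p + ((v:ℤ) - u)) (θf j) : ℂ) := by
          refine Finset.sum_congr rfl fun j _ => ?_
          rw [quad_expand, Qf_fourier, Finset.sum_mul]
          refine Finset.sum_congr rfl fun p _ => ?_
          rw [Finset.sum_mul]
          refine Finset.sum_congr rfl fun q _ => ?_
          rw [Finset.mul_sum]
          refine Finset.sum_congr rfl fun u _ => ?_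
          rw [Finset.mul_sum]
          refine Finset.sum_congr rfl fun v _ => ?_
          rw [fourier_add]
          ring
      _ = ∑ p : Fin n, ∑ q : Fin n, ∑ u ∈ range N, ∑ v ∈ range N,
            M p q * wker r u v *
              ∑ j ∈ range (2*N), (fourier ((q:ℤ) - p + ((v:ℤ) - u)) (θf j) : ℂ) := by
          rw [Finset.sum_comm]
          refine Finset.sum_congr rfl fun p _ => ?_
          rw [Finset.sum_comm]
          refine Finset.sum_congr rfl fun q _ => ?_
          rw [Finset.sum_comm]
          refine Finset.sum_congr rfl fun u _ => ?_
          rw [Finset.sum_comm]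
          refine Finset.sum_congr rfl fun v _ => ?_
          rw [Finset.mul_sum]
      _ = ∑ p : Fin n, ∑ q : Fin n, ((2*N : ℕ) : ℂ) *
            (M p q * (((N - ((q:ℤ) - p).natAbs : ℕ)) : ℂ) * wkerZ r ((q:ℤ) - p)) := by
          refine Finset.sum_congr rfl fun p _ => Finset.sum_congr rfl fun q _ => ?_
          have hd : ((q:ℤ) - p).natAbs < N := by
            have h1 := p.isLt; have h2 := q.isLt; omega
          have e1 : ∀ u ∈ range N, ∀ v ∈ range N,
              M p q * wker r u v *
                ∑ j ∈ range (2*N), (fourier ((q:ℤ) - p + ((v:ℤ) - u)) (θf j) : ℂ)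
              = ((2*N:ℕ):ℂ) * (M p q *
                  (if (u:ℤ) - v = (q:ℤ) - p then wker r u v else 0)) := by
            intro u hu v hv
            have hu' := mem_range.1 hu; have hv' := mem_range.1 hv
            rw [grid_sum N hN _ (by have h1 := p.isLt; have h2 := q.isLt; omega)]
            by_cases h : (u:ℤ) - v = (q:ℤ) - p
            · rw [if_pos (by omega), if_pos h]; ring
            · rw [if_neg (by omega), if_neg h]; ring
          rw [Finset.sum_congr rfl fun u hu => Finset.sum_congr rfl fun v hv => e1 u hu v hv]
          simp only [← Finset.mul_sum]
          rw [sum_diag N _ hd r]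
          ring
      _ = ((2*N : ℕ) : ℂ) * ∑ p : Fin n, ∑ q : Fin n,
            M p q * (((N - ((q:ℤ) - p).natAbs : ℕ)) : ℂ) * wkerZ r ((q:ℤ) - p) := by
          simp only [← Finset.mul_sum]
  rw [hexp] at hS
  have hre := (Complex.le_def.1 hS).1
  have hcast : ((2*N : ℕ) : ℂ) = (((2*N : ℕ) : ℝ) : ℂ) := by push_cast; ring
  rw [hcast, Complex.re_ofReal_mul] at hre
  simp only [Complex.zero_re] at hre
  have h2N : (0:ℝ) < ((2*N : ℕ) : ℝ) := by positivity
  nlinarith [hre]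

lemma core_pd {n : ℕ} (hn : 0 < n) {r : ℕ → ℂ} (hr0 : conj (r 0) = r 0) (hpd : Pd r n)
    (M : Matrix (Fin n) (Fin n) ℂ) (hM : M.IsHermitian)
    (hMneg : ∀ θ : Tcircle, (star (aVecC n θ) ⬝ᵥ M *ᵥ aVecC n θ).re ≤ 0) :
    (∑ p : Fin n, ∑ q : Fin n, M p q * wkerZ r ((q:ℤ) - p)).re ≤ 0 := by
  set A : ℝ := (∑ p : Fin n, ∑ q : Fin n, M p q * wkerZ r ((q:ℤ) - p)).re with hA_def
  set C : ℝ := (∑ p : Fin n, ∑ q : Fin n,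
      M p q * ((((q:ℤ) - p).natAbs : ℕ) : ℂ) * wkerZ r ((q:ℤ) - p)).re with hC_def
  have key : ∀ N, n ≤ N → (N:ℝ) * A ≤ C := by
    intro N hNn
    obtain ⟨r', hag, hpd'⟩ := pd_all hn hr0 hpd N hNn
    have hf := fejer_ineq hn M hM hMneg hNn hpd'
    have hw : ∀ (p q : Fin n), wkerZ r' ((q:ℤ) - p) = wkerZ r ((q:ℤ) - p) := by
      intro p q
      have hlt : ((q:ℤ) - p).natAbs < n := by
        have h1 := p.isLt; have h2 := q.isLt; omega
      unfold wkerZ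
      rw [hag _ hlt]
    rw [Finset.sum_congr rfl fun p _ => Finset.sum_congr rfl fun q _ => by rw [hw p q]] at hf
    have hlin : (∑ p : Fin n, ∑ q : Fin n,
        M p q * (((N - ((q:ℤ) - p).natAbs : ℕ)) : ℂ) * wkerZ r ((q:ℤ) - p))
        = ((N:ℝ) : ℂ) * (∑ p : Fin n, ∑ q : Fin n, M p q * wkerZ r ((q:ℤ) - p))
          - ∑ p : Fin n, ∑ q : Fin n,
              M p q * ((((q:ℤ) - p).natAbs : ℕ) : ℂ) * wkerZ r ((q:ℤ) - p) := by
      rw [Finset.mul_sum, ← Finset.sum_sub_distrib]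
      refine Finset.sum_congr rfl fun p _ => ?_
      rw [Finset.mul_sum, ← Finset.sum_sub_distrib]
      refine Finset.sum_congr rfl fun q _ => ?_
      have hlt : ((q:ℤ) - p).natAbs ≤ N := by
        have h1 := p.isLt; have h2 := q.isLt; omega
      have hcast : (((N - ((q:ℤ) - p).natAbs : ℕ)) : ℂ)
          = ((N:ℝ) : ℂ) - ((((q:ℤ) - p).natAbs : ℕ) : ℂ) := by
        rw [Nat.cast_sub hlt]
        push_cast
        ring
      rw [hcast]
      ring
    rw [hlin] at hf
    rw [Complex.sub_re, Complex.re_ofReal_mul] at hf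
    rw [← hA_def, ← hC_def] at hf
    linarith
  by_contra hcon
  push_neg at hcon
  obtain ⟨N, hN⟩ := exists_nat_gt (max (n:ℝ) (C / A))
  have hnN : n ≤ N := by
    have := lt_of_le_of_lt (le_max_left (n:ℝ) (C/A)) hN
    exact_mod_cast this.le
  have h1 := key N hnN
  have h2 : C / A < N := lt_of_le_of_lt (le_max_right _ _) hN
  have h3 : C < N * A := by rwa [div_lt_iff₀ hcon] at h2
  linarith


lemma trace_form {n : ℕ} (M R : Matrix (Fin n) (Fin n) ℂ) :
    Matrix.trace (M * Rᴴ) = ∑ p : Fin n, ∑ q : Fin n, M p q * conj (R p q) := by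
  simp only [Matrix.trace, Matrix.diag, Matrix.mul_apply, Matrix.conjTranspose_apply]
  exact Finset.sum_congr rfl fun p _ => Finset.sum_congr rfl fun q _ => by
    rw [RCLike.star_def]

lemma smul_one_herm {n : ℕ} (a : ℝ) :
    ((a:ℂ) • (1 : Matrix (Fin n) (Fin n) ℂ)).IsHermitian := by
  unfold Matrix.IsHermitian
  rw [Matrix.conjTranspose_smul, Matrix.conjTranspose_one, Complex.star_def,
    Complex.conj_ofReal]

/-- The core inequality: a Hermitian matrix whose symbol has nonpositive real part pairs
nonpositively with any PSD Toeplitz matrix. -/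
lemma core_psd {n : ℕ} (M R : Matrix (Fin n) (Fin n) ℂ) (hM : M.IsHermitian)
    (hMneg : ∀ θ : Tcircle, (star (aVecC n θ) ⬝ᵥ M *ᵥ aVecC n θ).re ≤ 0)
    (hR : R.PosSemidef) (hT : IsToeplitz R) :
    (Matrix.trace (M * Rᴴ)).re ≤ 0 := by
  rcases Nat.eq_zero_or_pos n with rfl | hn
  · simp [Matrix.trace]
  have key : ∀ ε : ℝ, 0 < ε →
      (Matrix.trace (M * Rᴴ)).re + ε * (Matrix.trace M).re ≤ 0 := by
    intro ε hε
    set Rε : Matrix (Fin n) (Fin n) ℂ := R + (ε:ℂ) • 1 with hRε_def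
    have hRεH : Rε.IsHermitian := hR.1.add (smul_one_herm ε)
    have hRεPD : Rε.PosDef := by
      refine Matrix.PosDef.of_dotProduct_mulVec_pos hRεH fun x hx => ?_
      rw [hRε_def, Matrix.add_mulVec, dotProduct_add, Matrix.smul_mulVec,
        Matrix.one_mulVec, dotProduct_smul]
      have h1 : 0 ≤ star x ⬝ᵥ R *ᵥ x := hR.dotProduct_mulVec_nonneg x
      have h2 : (0:ℂ) < (ε:ℂ) • (star x ⬝ᵥ x) := by
        rw [smul_eq_mul]
        exact mul_pos (Complex.zero_lt_real.2 hε) (Matrix.dotProduct_star_self_pos_iff.2 hx)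
      exact add_pos_of_nonneg_of_pos h1 h2
    have hTε : IsToeplitz Rε := by
      intro j k j' k' h
      have hR' := hT j k j' k' h
      simp only [hRε_def, Matrix.add_apply, Matrix.smul_apply, Matrix.one_apply]
      rw [hR']
      congr 1
      have : (j = k) ↔ (j' = k') := by
        rw [Fin.ext_iff, Fin.ext_iff]
        omega
      by_cases hjk : j = k
      · rw [if_pos hjk, if_pos (this.1 hjk)]
      · rw [if_neg hjk, if_neg (fun hh => hjk (this.2 hh))]
    set rε : ℕ → ℂ := fun m => if h : m < n then Rε ⟨m, h⟩ ⟨0, hn⟩ else 0 with hrε_def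
    have hRε_entry : ∀ j k : Fin n, Rε j k = wker rε j k := by
      intro j k
      unfold wker
      rcases le_or_gt (k:ℕ) (j:ℕ) with hkj | hkj
      · rw [if_pos hkj]
        have hlt : (j:ℕ) - k < n := by have := j.isLt; omega
        simp only [hrε_def, dif_pos hlt]
        exact hTε j k ⟨(j:ℕ) - k, hlt⟩ ⟨0, hn⟩ (by push_cast; omega)
      · rw [if_neg (by omega)]
        have hlt : (k:ℕ) - j < n := by have := k.isLt; omega
        simp only [hrε_def, dif_pos hlt]
        have e1 : Rε k j = Rε ⟨(k:ℕ) - j, hlt⟩ ⟨0, hn⟩ :=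
          hTε k j ⟨(k:ℕ) - j, hlt⟩ ⟨0, hn⟩ (by push_cast; omega)
        rw [← e1]
        have := hRεH.apply j k
        rw [← this]
        rfl
    have htoep : toep n rε = Rε := by
      ext j k
      rw [hRε_entry j k]
      rfl
    have hr0 : conj (rε 0) = rε 0 := by
      simp only [hrε_def, dif_pos hn]
      have h := hRεH.apply ⟨0, hn⟩ ⟨0, hn⟩
      rwa [Complex.star_def] at h
    have hpd : Pd rε n := Pd_of_toep_posDef (htoep ▸ hRεPD)
    have hcore := core_pd hn hr0 hpd M hM hMneg
    have hid : Matrix.trace (M * Rεᴴ)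
        = ∑ p : Fin n, ∑ q : Fin n, M p q * wkerZ rε ((q:ℤ) - p) := by
      rw [trace_form]
      refine Finset.sum_congr rfl fun p _ => Finset.sum_congr rfl fun q _ => ?_
      congr 1
      have h1 : conj (Rε p q) = Rε q p := by
        have h := hRεH.apply q p
        rwa [Complex.star_def] at h
      rw [h1, hRε_entry q p, wker_eq_wkerZ (rfl : ((q:ℕ):ℤ) - ((p:ℕ):ℤ) = (q:ℤ) - p)]
    have hsplit : Matrix.trace (M * Rεᴴ)
        = Matrix.trace (M * Rᴴ) + (ε:ℂ) * Matrix.trace M := by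
      rw [hRε_def, Matrix.conjTranspose_add, Matrix.conjTranspose_smul,
        Matrix.conjTranspose_one, Matrix.mul_add, Matrix.trace_add]
      congr 1
      rw [Matrix.mul_smul, Matrix.mul_one, Matrix.trace_smul]
      rw [Complex.star_def, Complex.conj_ofReal, smul_eq_mul]
    rw [← hid, hsplit, Complex.add_re, Complex.re_ofReal_mul] at hcore
    linarith
  by_contra hcon
  push_neg at hcon
  set T1 : ℝ := (Matrix.trace (M * Rᴴ)).re
  set T2 : ℝ := (Matrix.trace M).re
  set ε0 : ℝ := T1 / (2 * (|T2| + 1)) with hε0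
  have hε : 0 < ε0 := by rw [hε0]; positivity
  have hk := key _ hε
  have hmul : ε0 * (-|T2|) ≤ ε0 * T2 := mul_le_mul_of_nonneg_left (neg_abs_le T2) hε.le
  have hid2 : ε0 * |T2| * 2 + ε0 * 2 = T1 := by
    rw [hε0]
    field_simp
  linarith [hk, hmul, hid2, hε]

lemma gammastar_re {n : ℕ} (Λ : Matrix (Fin n) (Fin n) ℂ) (θ : Tcircle) :
    (GammaStarC n Λ θ).re = (1 / (2 * Real.pi)) * (star (aVecC n θ) ⬝ᵥ Λ *ᵥ aVecC n θ).re := by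
  unfold GammaStarC
  rw [Complex.re_ofReal_mul]

lemma quad_re_le {n : ℕ} {Λ : Matrix (Fin n) (Fin n) ℂ} {θ : Tcircle} {b : ℝ}
    (h : (GammaStarC n Λ θ).re ≤ b) :
    (star (aVecC n θ) ⬝ᵥ Λ *ᵥ aVecC n θ).re ≤ 2 * Real.pi * b := by
  rw [gammastar_re] at h
  have hπ := Real.pi_pos
  have h2 := mul_le_mul_of_nonneg_left h (by positivity : (0:ℝ) ≤ 2 * Real.pi)
  have he : 2 * Real.pi * (1 / (2 * Real.pi) * (star (aVecC n θ) ⬝ᵥ Λ *ᵥ aVecC n θ).re)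
      = (star (aVecC n θ) ⬝ᵥ Λ *ᵥ aVecC n θ).re := by
    field_simp
  rw [he] at h2
  exact h2

lemma aVec_self {n : ℕ} (θ : Tcircle) : star (aVecC n θ) ⬝ᵥ aVecC n θ = (n:ℂ) := by
  unfold dotProduct aVecC
  have e : ∀ k : Fin n, (star fun k : Fin n => (fourier (k:ℤ) θ : ℂ)) k
      * (fourier (k:ℤ) θ : ℂ) = 1 := by
    intro k
    simp only [Pi.star_apply, RCLike.star_def]
    rw [← fourier_neg, ← fourier_add]
    simp only [neg_add_cancel]
    exact fourier_zero
  rw [Finset.sum_congr rfl fun k _ => e k]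
  simp

/-- Budget bound for a feasible dual variable against a PSD Toeplitz matrix. -/
lemma dual_bound {n : ℕ} {κ : ℝ} (hκ : 0 < κ) (Λ R : Matrix (Fin n) (Fin n) ℂ)
    (hΛ : Λ.IsHermitian) (hcon : ∀ θ : Tcircle, (GammaStarC n Λ θ).re ≤ κ)
    (hR : R.PosSemidef) (hT : IsToeplitz R) :
    (Matrix.trace (Λ * Rᴴ)).re ≤ (2 * Real.pi * κ / n) * (Matrix.trace Rᴴ).re := by
  rcases Nat.eq_zero_or_pos n with rfl | hn
  · simp [Matrix.trace]
  set cc : ℝ := 2 * Real.pi * κ / n with hcc_def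
  set M : Matrix (Fin n) (Fin n) ℂ := Λ - (cc:ℂ) • 1 with hM_def
  have hMherm : M.IsHermitian := hΛ.sub (smul_one_herm cc)
  have hMneg : ∀ θ : Tcircle, (star (aVecC n θ) ⬝ᵥ M *ᵥ aVecC n θ).re ≤ 0 := by
    intro θ
    have e1 : star (aVecC n θ) ⬝ᵥ M *ᵥ aVecC n θ
        = star (aVecC n θ) ⬝ᵥ Λ *ᵥ aVecC n θ - (cc:ℂ) * (n:ℂ) := by
      rw [hM_def, Matrix.sub_mulVec, dotProduct_sub, Matrix.smul_mulVec,
        Matrix.one_mulVec, dotProduct_smul, aVec_self, smul_eq_mul]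
    rw [e1, Complex.sub_re]
    have e2 : ((cc:ℂ) * (n:ℂ)).re = cc * n := by
      have : ((cc:ℂ) * (n:ℂ)) = ((cc * n : ℝ) : ℂ) := by push_cast; ring
      rw [this, Complex.ofReal_re]
    rw [e2]
    have e3 : cc * n = 2 * Real.pi * κ := by
      rw [hcc_def]
      field_simp
    have h4 := quad_re_le (hcon θ)
    rw [e3]
    linarith
  have hcore := core_psd M R hMherm hMneg hR hT
  have hsplit : Matrix.trace (M * Rᴴ)
      = Matrix.trace (Λ * Rᴴ) - (cc:ℂ) * Matrix.trace Rᴴ := by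
    rw [hM_def, Matrix.sub_mul, Matrix.trace_sub]
    congr 1
    rw [Matrix.smul_mul, Matrix.one_mul, Matrix.trace_smul, smul_eq_mul]
  rw [hsplit, Complex.sub_re, Complex.re_ofReal_mul] at hcore
  linarith

/-- Pairing of a jointly feasible dual pair with noise is non-positive. -/
lemma noise_nonpos {n : ℕ} {c : Tcircle → Tcircle → ℝ} (hc_diag : ∀ θ, c θ θ = 0)
    (Λ₀ Λ₁ Rw : Matrix (Fin n) (Fin n) ℂ) (h0 : Λ₀.IsHermitian) (h1 : Λ₁.IsHermitian)
    (hcc : ∀ θ φ : Tcircle, (GammaStarC n Λ₀ θ).re + (GammaStarC n Λ₁ φ).re ≤ c θ φ)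
    (hw : Rw.PosSemidef) (hTw : IsToeplitz Rw) :
    (Matrix.trace (Λ₀ * Rwᴴ)).re + (Matrix.trace (Λ₁ * Rwᴴ)).re ≤ 0 := by
  set M : Matrix (Fin n) (Fin n) ℂ := Λ₀ + Λ₁ with hM_def
  have hMherm : M.IsHermitian := h0.add h1
  have hMneg : ∀ θ : Tcircle, (star (aVecC n θ) ⬝ᵥ M *ᵥ aVecC n θ).re ≤ 0 := by
    intro θ
    have e1 : star (aVecC n θ) ⬝ᵥ M *ᵥ aVecC n θ
        = star (aVecC n θ) ⬝ᵥ Λ₀ *ᵥ aVecC n θ + star (aVecC n θ) ⬝ᵥ Λ₁ *ᵥ aVecC n θ := by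
      rw [hM_def, Matrix.add_mulVec, dotProduct_add]
    have h2 : (GammaStarC n Λ₀ θ).re + (GammaStarC n Λ₁ θ).re ≤ 0 := by
      have := hcc θ θ
      rw [hc_diag θ] at this
      exact this
    have h3 := quad_re_le (b := -(GammaStarC n Λ₁ θ).re) (by linarith : (GammaStarC n Λ₀ θ).re ≤ -(GammaStarC n Λ₁ θ).re)
    have h4 : (star (aVecC n θ) ⬝ᵥ Λ₁ *ᵥ aVecC n θ).re = 2 * Real.pi * (GammaStarC n Λ₁ θ).re := by
      rw [gammastar_re]
      have hπ := Real.pi_ne_zero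
      field_simp
    rw [e1, Complex.add_re]
    rw [h4] at *
    nlinarith [Real.pi_pos]
  have hcore := core_psd M Rw hMherm hMneg hw hTw
  have hsplit : Matrix.trace (M * Rwᴴ)
      = Matrix.trace (Λ₀ * Rwᴴ) + Matrix.trace (Λ₁ * Rwᴴ) := by
    rw [hM_def, Matrix.add_mul, Matrix.trace_add]
  rw [hsplit, Complex.add_re] at hcore
  linarith

/-- The feasible-value set of the dual problem. -/
def SBset (n : ℕ) (c : Tcircle → Tcircle → ℝ) (κ : ℝ)
    (R₀ R₁ : Matrix (Fin n) (Fin n) ℂ) : Set ℝ :=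
  { x | ∃ Λ₀ Λ₁ : Matrix (Fin n) (Fin n) ℂ, Λ₀.IsHermitian ∧ Λ₁.IsHermitian ∧
      (∀ θ φ : Tcircle, (GammaStarC n Λ₀ θ).re + (GammaStarC n Λ₁ φ).re ≤ c θ φ) ∧
      (∀ θ : Tcircle, (GammaStarC n Λ₀ θ).re ≤ κ) ∧
      (∀ φ : Tcircle, (GammaStarC n Λ₁ φ).re ≤ κ) ∧
      x = (Matrix.trace (Λ₀ * R₀ᴴ)).re + (Matrix.trace (Λ₁ * R₁ᴴ)).re }

end

/-- `T_κ` is contractive with respect to additive noise: for positive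
semi-definite Toeplitz matrices `R₀, R₁, R_w`,
`T_κ(R₀ + R_w, R₁ + R_w) ≤ T_κ(R₀, R₁)`. -/
theorem Tkappa_contractive_additive (n : ℕ) (c : Tcircle → Tcircle → ℝ) (κ : ℝ)
    (hκ : 0 < κ)
    (hc_cont : Continuous fun p : Tcircle × Tcircle => c p.1 p.2)
    (hc_nonneg : ∀ θ φ, 0 ≤ c θ φ) (hc_diag : ∀ θ, c θ θ = 0)
    (R₀ R₁ Rw : Matrix (Fin n) (Fin n) ℂ)
    (h₀ : R₀.PosSemidef) (hT₀ : IsToeplitz R₀)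
    (h₁ : R₁.PosSemidef) (hT₁ : IsToeplitz R₁)
    (hw : Rw.PosSemidef) (hTw : IsToeplitz Rw) :
    Tdual n c κ (R₀ + Rw) (R₁ + Rw) ≤ Tdual n c κ R₀ R₁ := by
  have hSB0 : (0:ℝ) ∈ SBset n c κ R₀ R₁ := by
    have hg : ∀ θ : Tcircle, GammaStarC n (0 : Matrix (Fin n) (Fin n) ℂ) θ = 0 := by
      intro θ
      unfold GammaStarC
      rw [Matrix.zero_mulVec, dotProduct_zero, mul_zero]
    refine ⟨0, 0, Matrix.isHermitian_zero, Matrix.isHermitian_zero, ?_, ?_, ?_, ?_⟩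
    · intro θ φ
      rw [hg, hg]
      simpa using hc_nonneg θ φ
    · intro θ
      rw [hg]
      simpa using hκ.le
    · intro φ
      rw [hg]
      simpa using hκ.le
    · rw [Matrix.zero_mul, Matrix.trace_zero]
      simp
  have hBdd : BddAbove (SBset n c κ R₀ R₁) := by
    refine ⟨(2 * Real.pi * κ / n) * (Matrix.trace R₀ᴴ).re
      + (2 * Real.pi * κ / n) * (Matrix.trace R₁ᴴ).re, ?_⟩
    rintro x ⟨Λ₀, Λ₁, h1, h2, h3, h4, h5, rfl⟩
    exact add_le_add (dual_bound hκ Λ₀ R₀ h1 h4 h₀ hT₀) (dual_bound hκ Λ₁ R₁ h2 h5 h₁ hT₁)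
  rw [show Tdual n c κ (R₀ + Rw) (R₁ + Rw) = sSup (SBset n c κ (R₀ + Rw) (R₁ + Rw)) from rfl,
    show Tdual n c κ R₀ R₁ = sSup (SBset n c κ R₀ R₁) from rfl]
  apply Real.sSup_le
  · rintro x ⟨Λ₀, Λ₁, h1, h2, h3, h4, h5, rfl⟩
    have hb : ((Matrix.trace (Λ₀ * R₀ᴴ)).re + (Matrix.trace (Λ₁ * R₁ᴴ)).re)
        ∈ SBset n c κ R₀ R₁ := ⟨Λ₀, Λ₁, h1, h2, h3, h4, h5, rfl⟩
    have hnoise := noise_nonpos hc_diag Λ₀ Λ₁ Rw h1 h2 h3 hw hTw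
    have hsplit0 : Matrix.trace (Λ₀ * (R₀ + Rw)ᴴ)
        = Matrix.trace (Λ₀ * R₀ᴴ) + Matrix.trace (Λ₀ * Rwᴴ) := by
      rw [Matrix.conjTranspose_add, Matrix.mul_add, Matrix.trace_add]
    have hsplit1 : Matrix.trace (Λ₁ * (R₁ + Rw)ᴴ)
        = Matrix.trace (Λ₁ * R₁ᴴ) + Matrix.trace (Λ₁ * Rwᴴ) := by
      rw [Matrix.conjTranspose_add, Matrix.mul_add, Matrix.trace_add]
    have hle := le_csSup hBdd hb
    rw [hsplit0, hsplit1, Complex.add_re, Complex.add_re]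
    linarith
  · have := le_csSup hBdd hSB0
    linarith
end

section
/- For any Hermitian matrix Λ, non-negative measure Φ_w on T, and θ ∈ T, the convolution identity (1/2π)(Γ*(Λ) * Φ̌_w)(θ) = Γ*(Λ ⊙ conj(Γ(Φ_w)))(θ) holds, where Φ̌_w(ϕ) = Φ_w(−ϕ). -/
open MeasureTheory Matrix
open scoped ENNReal ComplexOrder

/-!
Translating `θ` by `x` multiplies the `(j, k)` term of `a(θ)ᴴ Λ a(θ)` by the character `e^{i(k-j)x}`,
and integrating that character against `Φ_w` gives `2π` times `conj Γ(Φ_w)_{jk}`. The reflection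
`Φ̌_w` turns `θ - ϕ` into `θ + ϕ`.
-/

open ComplexConjugate

section Circle

variable {T : ℝ}

theorem fourier_apply_add (m : ℤ) (x y : AddCircle T) :
    fourier m (x + y) = fourier m x * fourier m y := by
  simp only [fourier_apply, smul_add, AddCircle.toCircle_add, Circle.coe_mul]

theorem conj_fourier_mul_fourier (j k : ℤ) (x : AddCircle T) :
    conj (fourier j x) * fourier k x = fourier (k - j) x := by
  rw [← neg_add_eq_sub, fourier_add, fourier_neg]

theorem integrable_fourier [Fact (0 < T)] (m : ℤ) (μ : Measure (AddCircle T))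
    [IsFiniteMeasure μ] : Integrable (fourier m) μ :=
  (map_continuous (fourier m)).integrable_of_hasCompactSupport
    (HasCompactSupport.of_compactSpace _)

end Circle

theorem integral_sub_map_neg {G E : Type*} [MeasurableSpace G] [AddGroup G] [MeasurableNeg G]
    [NormedAddCommGroup E] [NormedSpace ℝ E] (μ : Measure G) (f : G → E) (θ : G) :
    ∫ ϕ, f (θ - ϕ) ∂(μ.map fun x => -x) = ∫ x, f (θ + x) ∂μ :=
  calc ∫ ϕ, f (θ - ϕ) ∂(μ.map fun x => -x)
      = ∫ x, f (θ - -x) ∂μ := integral_map_equiv (MeasurableEquiv.neg G) _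
    _ = ∫ x, f (θ + x) ∂μ := by simp only [sub_neg_eq_add]

instance fact_zero_lt_two_pi : Fact (0 < 2 * Real.pi) := ⟨Real.two_pi_pos⟩

theorem GammaStarC_eq_sum (n : ℕ) (Λ : Matrix (Fin n) (Fin n) ℂ) (θ : Tcircle) :
    GammaStarC n Λ θ = ((1 / (2 * Real.pi) : ℝ) : ℂ) *
      ∑ j : Fin n, ∑ k : Fin n, conj (fourier j θ) * Λ j k * fourier k θ := by
  simp only [GammaStarC, aVecC, dotProduct, mulVec, Pi.star_apply, Complex.star_def,
    Finset.mul_sum, mul_assoc]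

theorem GammaStarC_add (n : ℕ) (Λ : Matrix (Fin n) (Fin n) ℂ) (θ x : Tcircle) :
    GammaStarC n Λ (θ + x) = ((1 / (2 * Real.pi) : ℝ) : ℂ) *
      ∑ j : Fin n, ∑ k : Fin n,
        conj (fourier j θ) * Λ j k * fourier k θ * fourier ((k : ℤ) - j) x := by
  simp only [GammaStarC_eq_sum, fourier_apply_add, ← conj_fourier_mul_fourier, map_mul]
  congr 1
  refine Finset.sum_congr rfl fun j _ => Finset.sum_congr rfl fun k _ => ?_
  ring

theorem star_GammaC_apply (n : ℕ) (μ : Measure Tcircle) (j k : Fin n) :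
    star (GammaC n μ j k) = ((1 / (2 * Real.pi) : ℝ) : ℂ) * ∫ x, fourier ((k : ℤ) - j) x ∂μ := by
  simp only [GammaC, of_apply, Complex.star_def, map_mul, Complex.conj_ofReal, ← integral_conj,
    ← fourier_neg, neg_sub]

theorem integral_GammaStarC_add (n : ℕ) (Λ : Matrix (Fin n) (Fin n) ℂ) (μ : Measure Tcircle)
    [IsFiniteMeasure μ] (θ : Tcircle) :
    ((1 / (2 * Real.pi) : ℝ) : ℂ) * ∫ x, GammaStarC n Λ (θ + x) ∂μ =
      GammaStarC n (Λ.hadamard ((GammaC n μ).map star)) θ := by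
  have hint (j k : Fin n) (c : ℂ) : Integrable (fun x => c * fourier ((k : ℤ) - j) x) μ :=
    (integrable_fourier _ μ).const_mul c
  simp only [GammaStarC_add, integral_const_mul]
  rw [integral_finsetSum _ fun j _ => integrable_finsetSum _ fun k _ => hint j k _]
  simp only [integral_finsetSum _ fun k _ => hint _ k _, integral_const_mul, GammaStarC_eq_sum,
    hadamard_apply, map_apply, star_GammaC_apply, Finset.mul_sum]
  refine Finset.sum_congr rfl fun j _ => Finset.sum_congr rfl fun k _ => ?_
  ring

theorem gammaStar_convolution_identity_general (n : ℕ) (Λ : Matrix (Fin n) (Fin n) ℂ)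
    (Φw : Measure Tcircle) [IsFiniteMeasure Φw] (θ : Tcircle) :
    ((1 / (2 * Real.pi) : ℝ) : ℂ) *
        (∫ ϕ, GammaStarC n Λ (θ - ϕ) ∂(Φw.map (fun x : Tcircle => -x))) =
      GammaStarC n (Λ.hadamard ((GammaC n Φw).map star)) θ := by
  rw [integral_sub_map_neg, integral_GammaStarC_add]

/-- the convolution identity
`(1/2π)(Γ*(Λ) * Φ̌_w)(θ) = Γ*(Λ ⊙ conj(Γ(Φ_w)))(θ)`, where `Φ̌_w(ϕ) = Φ_w(−ϕ)` and
`(f * μ)(θ) = ∫ f(θ − ϕ) dμ(ϕ)`. -/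
theorem gammaStar_convolution_identity (n : ℕ) (Λ : Matrix (Fin n) (Fin n) ℂ)
    (hΛ : Λ.IsHermitian) (Φw : Measure Tcircle) [IsFiniteMeasure Φw] (θ : Tcircle) :
    ((1 / (2 * Real.pi) : ℝ) : ℂ) *
        (∫ ϕ, GammaStarC n Λ (θ - ϕ) ∂(Φw.map (fun x : Tcircle => -x))) =
      GammaStarC n (Λ.hadamard ((GammaC n Φw).map star)) θ :=
  gammaStar_convolution_identity_general n Λ Φw θ
end
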